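/- In a noetherian gcd-monoid, if elements a, b, x₁, …, x_p satisfy ax₁ = bx₂, ax₂ = bx₃, …, ax_{p−1} = bx_p, and ax_p = bx₁, then a = b. -/

import Mathlib

namespace MFR

variable {M : Type*} [Monoid M]

/-- `a` left-divides `b`. -/
def LeftDvd (a b : M) : Prop := ∃ x, a * x = b

/-- `a` right-divides `b`. -/
def RightDvd (a b : M) : Prop := ∃ x, x * a = b

/-- `m` is a right lcm of `a` and `b`. -/
def IsRightLcm (a b m : M) : Prop :=
  LeftDvd a m ∧ LeftDvd b m ∧ ∀ m', LeftDvd a m' → LeftDvd b m' → LeftDvd m m'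

/-- `m` is a left lcm of `a` and `b`. -/
def IsLeftLcm (a b m : M) : Prop :=
  RightDvd a m ∧ RightDvd b m ∧ ∀ m', RightDvd a m' → RightDvd b m' → RightDvd m m'

/-- `d` is a left gcd of `a` and `b`. -/
def IsLeftGcd (a b d : M) : Prop :=
  LeftDvd d a ∧ LeftDvd d b ∧ ∀ e, LeftDvd e a → LeftDvd e b → LeftDvd e d

/-- `d` is a right gcd of `a` and `b`. -/
def IsRightGcd (a b d : M) : Prop :=
  RightDvd d a ∧ RightDvd d b ∧ ∀ e, RightDvd e a → RightDvd e b → RightDvd e d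

/-- A gcd-monoid: cancellative, no nontrivial invertible elements,
left and right gcds exist. -/
structure IsGcdMon (M : Type*) [Monoid M] : Prop where
  mul_left_cancel : ∀ a b c : M, a * b = a * c → b = c
  mul_right_cancel : ∀ a b c : M, b * a = c * a → b = c
  unit_eq_one : ∀ a : M, IsUnit a → a = 1
  exists_leftGcd : ∀ a b : M, ∃ d, IsLeftGcd a b d
  exists_rightGcd : ∀ a b : M, ∃ d, IsRightGcd a b d

/-- Proper left divisibility: `a < b`. -/
def PLDvd (a b : M) : Prop := ∃ x, ¬ IsUnit x ∧ a * x = b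

/-- Proper right divisibility. -/
def PRDvd (a b : M) : Prop := ∃ x, ¬ IsUnit x ∧ x * a = b

/-- Noetherian: proper left and right divisibility are well-founded. -/
def Noeth (M : Type*) [Monoid M] : Prop :=
  WellFounded (PLDvd (M := M)) ∧ WellFounded (PRDvd (M := M))

/-- Proper factor relation. -/
def Factor (a b : M) : Prop := ∃ x y, x * a * y = b ∧ (¬ IsUnit x ∨ ¬ IsUnit y)

/-- Atoms: not a product of two non-invertible elements. -/
def Atomic (a : M) : Prop := ¬ IsUnit a ∧ ∀ x y, a = x * y → IsUnit x ∨ IsUnit y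

/-- Existence of a common right multiple. -/
def CommonRightMul (a b : M) : Prop := ∃ m, LeftDvd a m ∧ LeftDvd b m

/-- Existence of a common left multiple. -/
def CommonLeftMul (a b : M) : Prop := ∃ m, RightDvd a m ∧ RightDvd b m

/-- The 3-Ore condition. -/
def ThreeOre (M : Type*) [Monoid M] : Prop :=
  (∀ a b c : M, CommonRightMul a b → CommonRightMul a c → CommonRightMul b c →
    ∃ m, LeftDvd a m ∧ LeftDvd b m ∧ LeftDvd c m) ∧
  (∀ a b c : M, CommonLeftMul a b → CommonLeftMul a c → CommonLeftMul b c →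
    ∃ m, RightDvd a m ∧ RightDvd b m ∧ RightDvd c m)

/-- The product of two multifractions. -/
def fprod : List M → List M → List M
  | [], b => b
  | a, [] => a
  | a, h :: t =>
    if a.length % 2 = 1 then a.dropLast ++ ((a.getLast?.getD 1) * h) :: t
    else a ++ h :: t

/-- The congruence `≃` on multifractions generated by `(1,∅)`, `(a/a,∅)`, `(1/a/a,∅)`. -/
inductive SimEq : List M → List M → Prop
  | one : SimEq [1] []
  | divPos (a : M) : SimEq [a, a] []
  | divNeg (a : M) : SimEq [1, a, a] []
  | refl (a : List M) : SimEq a a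
  | symm {a b} : SimEq a b → SimEq b a
  | trans {a b c} : SimEq a b → SimEq b c → SimEq a c
  | mul {a b c d} : SimEq a b → SimEq c d → SimEq (fprod a c) (fprod b d)

/-- The reduction rule `R_{i,x}` on multifractions (entries indexed from 1):
`Reduce i x a b` means `b = a • R_{i,x}`. -/
def Reduce (i : ℕ) (x : M) (a b : List M) : Prop :=
  (i = 1 ∧ ∃ (a₁ a₂ b₁ b₂ : M) (s : List M),
    a = a₁ :: a₂ :: s ∧ b = b₁ :: b₂ :: s ∧ b₁ * x = a₁ ∧ b₂ * x = a₂) ∨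
  (2 ≤ i ∧ i % 2 = 0 ∧ ∃ (p s : List M) (am ai ap bi bp x' : M),
    p.length = i - 2 ∧
    a = p ++ am :: ai :: ap :: s ∧
    b = p ++ (am * x') :: bi :: bp :: s ∧
    IsRightLcm x ai (x * bi) ∧ x * bi = ai * x' ∧ x * bp = ap) ∨
  (3 ≤ i ∧ i % 2 = 1 ∧ ∃ (p s : List M) (am ai ap bi bp x' : M),
    p.length = i - 2 ∧
    a = p ++ am :: ai :: ap :: s ∧
    b = p ++ (x' * am) :: bi :: bp :: s ∧
    IsLeftLcm x ai (bi * x) ∧ bi * x = x' * ai ∧ bp * x = ap)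

/-- One-step reduction. -/
def Red (a b : List M) : Prop := ∃ i x, x ≠ (1 : M) ∧ Reduce i x a b

/-- Reflexive-transitive closure of one-step reduction. -/
def RedStar : List M → List M → Prop := Relation.ReflTransGen Red

/-- Irreducible multifractions. -/
def RIrred (a : List M) : Prop := ∀ b, ¬ Red a b

/-- Right basic elements: closure of the atoms under right complement. -/
inductive RightBasic : M → Prop
  | atom {a : M} : Atomic a → RightBasic a
  | compl {a b a' : M} : RightBasic a → RightBasic b →
      IsRightLcm a b (b * a') → RightBasic a'

/-- Minimal number of atoms needed to express `a`. -/
noncomputable def atomLen (a : M) : ℕ :=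
  sInf {n | ∃ l : List M, (∀ x ∈ l, Atomic x) ∧ l.length = n ∧ l.prod = a}

/-! Each `a * xᵢ = b * xᵢ₊₁` is a common right multiple of `a` and `b`, hence a multiple of their
right lcm `a * b' = b * a'`, which exists by noetherianity. Cancelling gives `xᵢ = b' * yᵢ` and
`xᵢ₊₁ = a' * yᵢ`, so `a' * yᵢ = b' * yᵢ₊₁` is a cyclic system of the same shape. If `b'` is
nontrivial, `y₀` is a proper right divisor of `x₀` and induction gives `a' = b'`; if `b' = 1`, the
`yᵢ` are cyclically multiplied by `a'`, so `a' ^ p = 1` and `a' = 1`. Either way `a = b`. -/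

theorem IsGcdMon.exists_isRightLcm (h : IsGcdMon M) (hwf : WellFounded (PLDvd (M := M)))
    {a b : M} (hab : CommonRightMul a b) : ∃ m, IsRightLcm a b m := by
  obtain ⟨m, ⟨ham, hbm⟩, hmin⟩ := hwf.has_min {n | LeftDvd a n ∧ LeftDvd b n} hab
  refine ⟨m, ham, hbm, fun n han hbn => ?_⟩
  obtain ⟨d, ⟨t, hdt⟩, hdn, hd⟩ := h.exists_leftGcd m n
  -- the gcd `d` of `m` and `n` is again a common multiple, so minimality of `m` forces `d = m`
  have ht : IsUnit t := by
    by_contra ht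
    exact hmin d ⟨hd a ham han, hd b hbm hbn⟩ ⟨t, ht, hdt⟩
  rwa [← hdt, h.unit_eq_one t ht, mul_one]

theorem IsRightLcm.exists_eq_mul_of_mul_eq (h : IsGcdMon M) {a b a' b' u v : M}
    (hlcm : IsRightLcm a b (a * b')) (hab : a * b' = b * a') (huv : a * u = b * v) :
    ∃ y, u = b' * y ∧ v = a' * y := by
  obtain ⟨y, hy⟩ := hlcm.2.2 (a * u) ⟨u, rfl⟩ ⟨v, huv.symm⟩
  refine ⟨y, h.mul_left_cancel a _ _ ?_, h.mul_left_cancel b _ _ ?_⟩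
  · rw [← hy, mul_assoc]
  · rw [← huv, ← hy, hab, mul_assoc]

open Fin.NatCast in
theorem IsGcdMon.eq_one_of_mul_cyclic (h : IsGcdMon M) {p : ℕ} [NeZero p] {c : M}
    (x : Fin p → M) (hx : ∀ i : Fin p, c * x i = x (i + 1)) : c = 1 := by
  have hpow : ∀ n : ℕ, x n = c ^ n * x 0 := by
    intro n
    induction n with
    | zero => simp
    | succ n ih => rw [Nat.cast_succ, ← hx, ih, ← mul_assoc, ← pow_succ']
  have hcp : c ^ p = 1 := h.mul_right_cancel (x 0) _ _ (by rw [← hpow, Fin.natCast_self, one_mul])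
  exact h.unit_eq_one c (.of_pow_eq_one hcp (NeZero.ne p))

/-- cyclic system `a xᵢ = b xᵢ₊₁` forces `a = b`. -/
theorem stmt_18 {M : Type*} [Monoid M] (h : IsGcdMon M) (hn : Noeth M)
    (p : ℕ) [NeZero p] (a b : M) (x : Fin p → M)
    (hx : ∀ i : Fin p, a * x i = b * x (i + 1)) : a = b := by
  suffices ∀ z a b (x : Fin p → M), x 0 = z → (∀ i, a * x i = b * x (i + 1)) → a = b from
    this _ a b x rfl hx
  intro z
  induction z using hn.2.induction with
  | _ z ih =>
    intro a b x hz hx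
    obtain ⟨m, hlcm⟩ := h.exists_isRightLcm hn.1 ⟨a * x 0, ⟨x 0, rfl⟩, ⟨x (0 + 1), (hx 0).symm⟩⟩
    obtain ⟨b', rfl⟩ := hlcm.1
    obtain ⟨a', hab⟩ := hlcm.2.1
    choose y hxy hyx using fun i => hlcm.exists_eq_mul_of_mul_eq h hab.symm (hx i)
    have hy : ∀ i, a' * y i = b' * y (i + 1) := fun i => by rw [← hyx, ← hxy]
    suffices a' = b' from h.mul_right_cancel b' _ _ (by rw [← hab, this])
    by_cases hb' : IsUnit b'
    · obtain rfl := h.unit_eq_one b' hb'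
      exact h.eq_one_of_mul_cyclic y (by simpa using hy)
    · exact ih (y 0) ⟨b', hb', by rw [← hxy, hz]⟩ a' b' y rfl hy

end MFR
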